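/- Consider noisy linear regression tasks: let X = {x ∈ ℝ^d : ‖x‖ ≤ 1}, Y = [−1, 1], H = {x ↦ Bᵀx : B ∈ ℝ^{d×k}, BᵀB = I_k}, and F = {z ↦ wᵀz : w ∈ ℝ^k, ‖w‖ ≤ 1/2}. Let μ be a probability measure on X whose second-moment matrix Σ = ∫ x xᵀ dμ satisfies c₁·I_d ⪯ Σ ⪯ c₂·I_d for constants 0 < c₁ ≤ c₂, and let ν be a probability measure on [−1/2, 1/2] with mean zero. For each (B, w), let P_{B,w} be the distribution of (x, wᵀBᵀx + η) with x ∼ μ and η ∼ ν independent, and let ℓ(y', y) = ¼(y' − y)². Then there exists a constant C > 0 depending only on c₁ and c₂ such that for every ε ∈ (0, 1), the ε-task-eluder dimension satisfies dim(H, F, ε) ≤ C·k·log(1/ε). -/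

import Mathlib

open MeasureTheory Matrix

/-- Euclidean norm of a vector in `ℝ^m`. -/
noncomputable def l2norm {m : ℕ} (v : Fin m → ℝ) : ℝ := Real.sqrt (∑ i, v i ^ 2)

/-- The data distribution of the noisy linear regression task with parameters `(B, w)`:
the law of `(x, wᵀBᵀx + η)` where `x ∼ μ` and `η ∼ ν` independently. -/
noncomputable def regP {d k : ℕ} (μ : Measure (Fin d → ℝ)) (ν : Measure ℝ)
    (B : Matrix (Fin d) (Fin k) ℝ) (w : Fin k → ℝ) : Measure ((Fin d → ℝ) × ℝ) :=
  Measure.map (fun q : (Fin d → ℝ) × ℝ => (q.1, w ⬝ᵥ (Bᵀ *ᵥ q.1) + q.2)) (μ.prod ν)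

/-- The excess risk of the predictor with parameters `(B', w')` over the one with parameters
`(B, w)` for the loss `ℓ(y', y) = ¼(y' − y)²` under the task distribution `P_{B,w}`. -/
noncomputable def regExcess {d k : ℕ} (μ : Measure (Fin d → ℝ)) (ν : Measure ℝ)
    (B : Matrix (Fin d) (Fin k) ℝ) (w : Fin k → ℝ)
    (B' : Matrix (Fin d) (Fin k) ℝ) (w' : Fin k → ℝ) : ℝ :=
  ∫ xy, ((w' ⬝ᵥ (B'ᵀ *ᵥ xy.1) - xy.2) ^ 2 / 4 - (w ⬝ᵥ (Bᵀ *ᵥ xy.1) - xy.2) ^ 2 / 4)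
    ∂(regP μ ν B w)

/-- `ε`-independence of the task `(B, w j)` from its predecessors `(B, w i)`, `i < j`, with
respect to `H = {x ↦ Bᵀx : BᵀB = I_k}` and `F = {z ↦ wᵀz : ‖w‖ ≤ 1/2}`. -/
def regEpsIndepAt {d k n : ℕ} (μ : Measure (Fin d → ℝ)) (ν : Measure ℝ) (ε : ℝ)
    (B : Matrix (Fin d) (Fin k) ℝ) (w : Fin n → Fin k → ℝ) (j : Fin n) : Prop :=
  ∃ B' : Matrix (Fin d) (Fin k) ℝ, B'ᵀ * B' = 1 ∧
    ∃ w' : Fin n → Fin k → ℝ, (∀ i, l2norm (w' i) ≤ 1 / 2) ∧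
      (∑ i ∈ Finset.univ.filter (fun i : Fin n => i < j),
          regExcess μ ν B (w i) B' (w' i)) ≤ ε ∧
      ∀ v : Fin k → ℝ, l2norm v ≤ 1 / 2 → ε / 2 < regExcess μ ν B (w j) B' v

/-!
The excess risk of `(B', w')` on the task `(B, w)` is `¼ E⟨B'w' - Bw, x⟩²`, hence between `c₁/4`
and `1/4` times `‖B'w' - Bw‖²`. If the task `(B, w j)` is `ε`-independent, witnessed by `B'`, let
`q` be the component of `B (w j)` orthogonal to the range of `B'`. Since `B'ᵀ B (w j)` is an
admissible prediction layer, `‖q‖² > 2ε`; and `q` sees each earlier task only through its error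
`B' w'ᵢ - B wᵢ`. Hence `r = Bᵀq / ‖q‖` is a unit vector with `⟨r, w j⟩² > 2ε` and
`∑_{i<j} ⟨r, w i⟩² ≤ 4ε/c₁`.

An elliptic potential argument bounds the length of such a sequence: for
`Vⱼ = α I + ∑_{i<j} wᵢwᵢᵀ` with `α = 4ε/c₁`, Cauchy–Schwarz gives `wⱼᵀVⱼ⁻¹wⱼ ≥ c₁/4`, so by the
matrix determinant lemma `det Vₙ ≥ αᵏ (1 + c₁/4)ⁿ`, while AM–GM on the eigenvalues gives
`det Vₙ ≤ (α + n/(4k))ᵏ`. Comparing logarithms, `n = O(k log(1/ε))`.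
-/

lemma l2norm_eq_sqrt_dotProduct_self {m : ℕ} (v : Fin m → ℝ) : l2norm v = √(v ⬝ᵥ v) := by
  simp [l2norm, dotProduct, sq]

lemma l2norm_le_iff {m : ℕ} {v : Fin m → ℝ} {a : ℝ} (ha : 0 ≤ a) :
    l2norm v ≤ a ↔ v ⬝ᵥ v ≤ a ^ 2 := by
  rw [l2norm_eq_sqrt_dotProduct_self, Real.sqrt_le_left ha]

section DotProduct

variable {ι κ : Type*} [Fintype ι] [Fintype κ]

lemma dotProduct_self_nonneg (v : ι → ℝ) : 0 ≤ v ⬝ᵥ v := by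
  simpa using dotProduct_star_self_nonneg v

lemma sq_dotProduct_le (u v : ι → ℝ) : (u ⬝ᵥ v) ^ 2 ≤ (u ⬝ᵥ u) * (v ⬝ᵥ v) := by
  simpa [dotProduct, sq] using Finset.sum_mul_sq_le_sq_mul_sq Finset.univ u v

lemma transpose_mulVec_dotProduct (B : Matrix ι κ ℝ) (y : ι → ℝ) (z : κ → ℝ) :
    (Bᵀ *ᵥ y) ⬝ᵥ z = y ⬝ᵥ (B *ᵥ z) := by
  rw [mulVec_transpose, dotProduct_mulVec]

variable [DecidableEq κ] {B : Matrix ι κ ℝ}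

lemma mulVec_dotProduct_mulVec_of_orthonormal (hB : Bᵀ * B = 1) (u v : κ → ℝ) :
    (B *ᵥ u) ⬝ᵥ (B *ᵥ v) = u ⬝ᵥ v := by
  rw [← transpose_mulVec_dotProduct, mulVec_mulVec, hB, one_mulVec]

lemma sub_projection_dotProduct_mulVec (hB : Bᵀ * B = 1) (y : ι → ℝ) (z : κ → ℝ) :
    (y - B *ᵥ (Bᵀ *ᵥ y)) ⬝ᵥ (B *ᵥ z) = 0 := by
  rw [sub_dotProduct, mulVec_dotProduct_mulVec_of_orthonormal hB, transpose_mulVec_dotProduct,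
    sub_self]

lemma sub_projection_dotProduct_self (hB : Bᵀ * B = 1) (y : ι → ℝ) :
    (y - B *ᵥ (Bᵀ *ᵥ y)) ⬝ᵥ y = (y - B *ᵥ (Bᵀ *ᵥ y)) ⬝ᵥ (y - B *ᵥ (Bᵀ *ᵥ y)) := by
  rw [dotProduct_sub _ y, sub_projection_dotProduct_mulVec hB, sub_zero]

lemma transpose_mulVec_dotProduct_self_le (hB : Bᵀ * B = 1) (y : ι → ℝ) :
    (Bᵀ *ᵥ y) ⬝ᵥ (Bᵀ *ᵥ y) ≤ y ⬝ᵥ y := by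
  have hq := dotProduct_self_nonneg (y - B *ᵥ (Bᵀ *ᵥ y))
  rw [← sub_projection_dotProduct_self hB, sub_dotProduct, dotProduct_comm (B *ᵥ _),
    ← transpose_mulVec_dotProduct] at hq
  linarith

lemma exists_sq_dotProduct_eq_div (hB : Bᵀ * B = 1) {q : ι → ℝ} (hq : 0 < q ⬝ᵥ q) :
    ∃ r : κ → ℝ, r ⬝ᵥ r ≤ 1 ∧ ∀ w, (r ⬝ᵥ w) ^ 2 = (q ⬝ᵥ (B *ᵥ w)) ^ 2 / (q ⬝ᵥ q) := by
  have hsq : (√(q ⬝ᵥ q))⁻¹ ^ 2 = (q ⬝ᵥ q)⁻¹ := by rw [inv_pow, Real.sq_sqrt hq.le]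
  refine ⟨(√(q ⬝ᵥ q))⁻¹ • (Bᵀ *ᵥ q), ?_, fun w => ?_⟩
  · rw [smul_dotProduct, dotProduct_smul, smul_eq_mul, smul_eq_mul, ← mul_assoc, ← sq, hsq,
      inv_mul_le_iff₀ hq, mul_one]
    exact transpose_mulVec_dotProduct_self_le hB q
  · rw [smul_dotProduct, transpose_mulVec_dotProduct, smul_eq_mul, mul_pow, hsq, div_eq_inv_mul]

end DotProduct

noncomputable def secondMoment {d : ℕ} (μ : Measure (Fin d → ℝ)) : Matrix (Fin d) (Fin d) ℝ :=
  Matrix.of fun i j => ∫ x, x i * x j ∂μ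

section SecondMoment

variable {d : ℕ} {μ : Measure (Fin d → ℝ)}

lemma ae_sq_dotProduct_le (hx : ∀ᵐ x ∂μ, l2norm x ≤ 1) (u : Fin d → ℝ) :
    ∀ᵐ x ∂μ, (u ⬝ᵥ x) ^ 2 ≤ u ⬝ᵥ u := by
  filter_upwards [hx] with x hx1
  have hxx : x ⬝ᵥ x ≤ 1 := by simpa using (l2norm_le_iff zero_le_one).1 hx1
  calc (u ⬝ᵥ x) ^ 2 ≤ (u ⬝ᵥ u) * (x ⬝ᵥ x) := sq_dotProduct_le u x
    _ ≤ u ⬝ᵥ u := mul_le_of_le_one_right (dotProduct_self_nonneg u) hxx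

variable [IsProbabilityMeasure μ]

lemma integrable_dotProduct (hx : ∀ᵐ x ∂μ, l2norm x ≤ 1) (u : Fin d → ℝ) :
    Integrable (fun x => u ⬝ᵥ x) μ := by
  refine .of_bound (by fun_prop) ((1 + u ⬝ᵥ u) / 2) ?_
  filter_upwards [ae_sq_dotProduct_le hx u] with x hux
  rw [Real.norm_eq_abs, abs_le]
  constructor <;> nlinarith [sq_nonneg (u ⬝ᵥ x - 1), sq_nonneg (u ⬝ᵥ x + 1)]

lemma integrable_dotProduct_mul_dotProduct (hx : ∀ᵐ x ∂μ, l2norm x ≤ 1) (u v : Fin d → ℝ) :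
    Integrable (fun x => (u ⬝ᵥ x) * (v ⬝ᵥ x)) μ := by
  refine .of_bound (by fun_prop) ((u ⬝ᵥ u + v ⬝ᵥ v) / 2) ?_
  filter_upwards [ae_sq_dotProduct_le hx u, ae_sq_dotProduct_le hx v] with x hux hvx
  rw [Real.norm_eq_abs, abs_le]
  constructor <;> nlinarith [sq_nonneg (u ⬝ᵥ x - v ⬝ᵥ x), sq_nonneg (u ⬝ᵥ x + v ⬝ᵥ x)]

lemma integrable_sq_dotProduct (hx : ∀ᵐ x ∂μ, l2norm x ≤ 1) (u : Fin d → ℝ) :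
    Integrable (fun x => (u ⬝ᵥ x) ^ 2) μ := by
  simpa only [sq] using integrable_dotProduct_mul_dotProduct hx u u

lemma integral_sq_dotProduct_le (hx : ∀ᵐ x ∂μ, l2norm x ≤ 1) (u : Fin d → ℝ) :
    ∫ x, (u ⬝ᵥ x) ^ 2 ∂μ ≤ u ⬝ᵥ u := by
  calc ∫ x, (u ⬝ᵥ x) ^ 2 ∂μ ≤ ∫ _, u ⬝ᵥ u ∂μ :=
        integral_mono_ae (integrable_sq_dotProduct hx u) (integrable_const _)
          (ae_sq_dotProduct_le hx u)
    _ = u ⬝ᵥ u := by simp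

lemma integral_sq_dotProduct_eq (hx : ∀ᵐ x ∂μ, l2norm x ≤ 1) (u : Fin d → ℝ) :
    ∫ x, (u ⬝ᵥ x) ^ 2 ∂μ = u ⬝ᵥ (secondMoment μ *ᵥ u) := by
  have hint : ∀ i j, Integrable (fun x : Fin d → ℝ => x i * x j) μ := fun i j => by
    simpa [single_dotProduct] using
      integrable_dotProduct_mul_dotProduct hx (Pi.single i 1) (Pi.single j 1)
  have hexpand : ∀ x : Fin d → ℝ, (u ⬝ᵥ x) ^ 2 = ∑ i, ∑ j, u i * u j * (x i * x j) := fun x => by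
    simp only [dotProduct, sq, Finset.sum_mul_sum]
    exact Finset.sum_congr rfl fun i _ => Finset.sum_congr rfl fun j _ => by ring
  simp_rw [hexpand]
  rw [integral_finsetSum _ fun i _ => integrable_finsetSum _ fun j _ => (hint i j).const_mul _]
  simp_rw [integral_finsetSum _ fun j _ => (hint _ j).const_mul _, integral_const_mul]
  simp only [dotProduct, mulVec, secondMoment, of_apply, Finset.mul_sum]
  exact Finset.sum_congr rfl fun i _ => Finset.sum_congr rfl fun j _ => by ring

lemma mul_dotProduct_self_le_integral_sq_dotProduct (hx : ∀ᵐ x ∂μ, l2norm x ≤ 1) {c : ℝ}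
    (hc : (secondMoment μ - c • (1 : Matrix (Fin d) (Fin d) ℝ)).PosSemidef) (u : Fin d → ℝ) :
    c * (u ⬝ᵥ u) ≤ ∫ x, (u ⬝ᵥ x) ^ 2 ∂μ := by
  have := hc.dotProduct_mulVec_nonneg u
  simp only [star_trivial, sub_mulVec, dotProduct_sub, smul_mulVec, one_mulVec,
    dotProduct_smul, smul_eq_mul] at this
  rw [integral_sq_dotProduct_eq hx]
  linarith

end SecondMoment

section Excess

variable {d k : ℕ} {μ : Measure (Fin d → ℝ)} {ν : Measure ℝ}
  [IsProbabilityMeasure μ] [IsProbabilityMeasure ν]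

/-- The cross term between the prediction error and the noise vanishes because the noise is
centred and independent of `x`. -/
lemma regExcess_eq (hx : ∀ᵐ x ∂μ, l2norm x ≤ 1) (he : ∀ᵐ e ∂ν, |e| ≤ 1 / 2)
    (hmean : ∫ e, e ∂ν = 0) (B B' : Matrix (Fin d) (Fin k) ℝ) (w w' : Fin k → ℝ) :
    regExcess μ ν B w B' w' = (∫ x, ((B' *ᵥ w' - B *ᵥ w) ⬝ᵥ x) ^ 2 ∂μ) / 4 := by
  set u := B' *ᵥ w' - B *ᵥ w
  have hpointwise : ∀ q : (Fin d → ℝ) × ℝ,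
      (w' ⬝ᵥ (B'ᵀ *ᵥ q.1) - (w ⬝ᵥ (Bᵀ *ᵥ q.1) + q.2)) ^ 2 / 4
        - (w ⬝ᵥ (Bᵀ *ᵥ q.1) - (w ⬝ᵥ (Bᵀ *ᵥ q.1) + q.2)) ^ 2 / 4
      = (u ⬝ᵥ q.1) ^ 2 / 4 - (u ⬝ᵥ q.1) / 2 * q.2 := fun q => by
    simp only [u, dotProduct_comm _ q.1, dotProduct_transpose_mulVec, dotProduct_sub]
    ring
  have hnoise : Integrable (fun e : ℝ => e) ν :=
    .of_bound (by fun_prop) (1 / 2) (by simpa only [Real.norm_eq_abs] using he)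
  rw [regExcess, regP, integral_map (by fun_prop) (by fun_prop)]
  simp only [hpointwise]
  rw [integral_sub (((integrable_sq_dotProduct hx u).div_const 4).comp_fst ν)
      (((integrable_dotProduct hx u).div_const 2).mul_prod hnoise),
    integral_fun_fst (fun x => (u ⬝ᵥ x) ^ 2 / 4),
    integral_prod_mul (fun x => (u ⬝ᵥ x) / 2) (fun e => e), hmean,
    integral_div]
  simp

lemma four_regExcess_le (hx : ∀ᵐ x ∂μ, l2norm x ≤ 1) (he : ∀ᵐ e ∂ν, |e| ≤ 1 / 2)
    (hmean : ∫ e, e ∂ν = 0) (B B' : Matrix (Fin d) (Fin k) ℝ) (w w' : Fin k → ℝ) :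
    4 * regExcess μ ν B w B' w' ≤ (B' *ᵥ w' - B *ᵥ w) ⬝ᵥ (B' *ᵥ w' - B *ᵥ w) := by
  rw [regExcess_eq hx he hmean]
  linarith [integral_sq_dotProduct_le hx (B' *ᵥ w' - B *ᵥ w)]

lemma mul_dotProduct_self_le_four_regExcess (hx : ∀ᵐ x ∂μ, l2norm x ≤ 1)
    (he : ∀ᵐ e ∂ν, |e| ≤ 1 / 2) (hmean : ∫ e, e ∂ν = 0) {c : ℝ}
    (hc : (secondMoment μ - c • (1 : Matrix (Fin d) (Fin d) ℝ)).PosSemidef)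
    (B B' : Matrix (Fin d) (Fin k) ℝ) (w w' : Fin k → ℝ) :
    c * ((B' *ᵥ w' - B *ᵥ w) ⬝ᵥ (B' *ᵥ w' - B *ᵥ w)) ≤ 4 * regExcess μ ν B w B' w' := by
  rw [regExcess_eq hx he hmean]
  linarith [mul_dotProduct_self_le_integral_sq_dotProduct hx hc (B' *ᵥ w' - B *ᵥ w)]

lemma exists_direction_of_regEpsIndepAt {n : ℕ} (hx : ∀ᵐ x ∂μ, l2norm x ≤ 1)
    (he : ∀ᵐ e ∂ν, |e| ≤ 1 / 2) (hmean : ∫ e, e ∂ν = 0) {c : ℝ} (hc : 0 < c)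
    (hS : (secondMoment μ - c • (1 : Matrix (Fin d) (Fin d) ℝ)).PosSemidef) {ε : ℝ} (hε : 0 < ε)
    {B : Matrix (Fin d) (Fin k) ℝ} (hB : Bᵀ * B = 1) {w : Fin n → Fin k → ℝ} {j : Fin n}
    (hwj : l2norm (w j) ≤ 1 / 2) (hj : regEpsIndepAt μ ν ε B w j) :
    ∃ r : Fin k → ℝ, r ⬝ᵥ r ≤ 1 ∧ 2 * ε < (r ⬝ᵥ w j) ^ 2 ∧
      ∑ i ∈ Finset.univ.filter (· < j), (r ⬝ᵥ w i) ^ 2 ≤ 4 * ε / c := by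
  obtain ⟨B', hB', w', -, hsum, hfar⟩ := hj
  set y := B *ᵥ w j
  set q := y - B' *ᵥ (B'ᵀ *ᵥ y)
  -- the best approximation `B'ᵀ y` of the new task is an admissible prediction layer for `B'`
  have hQ : 2 * ε < q ⬝ᵥ q := by
    have hv : l2norm (B'ᵀ *ᵥ y) ≤ 1 / 2 := by
      rw [l2norm_le_iff (by norm_num)]
      calc _ ≤ y ⬝ᵥ y := transpose_mulVec_dotProduct_self_le hB' y
        _ = w j ⬝ᵥ w j := mulVec_dotProduct_mulVec_of_orthonormal hB _ _
        _ ≤ _ := (l2norm_le_iff (by norm_num)).1 hwj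
    have h4 := four_regExcess_le hx he hmean B B' (w j) (B'ᵀ *ᵥ y)
    rw [← neg_sub, neg_dotProduct, dotProduct_neg, neg_neg] at h4
    linarith [hfar _ hv]
  have hQpos : 0 < q ⬝ᵥ q := by linarith
  obtain ⟨r, hr, hrw⟩ := exists_sq_dotProduct_eq_div hB hQpos
  refine ⟨r, hr, ?_, ?_⟩
  · rwa [hrw, sub_projection_dotProduct_self hB' y, sq, mul_self_div_self]
  have hterm : ∀ i, (r ⬝ᵥ w i) ^ 2 ≤ 4 / c * regExcess μ ν B (w i) B' (w' i) := fun i => by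
    set a := B' *ᵥ w' i - B *ᵥ w i
    have hqa : q ⬝ᵥ (B *ᵥ w i) = -(q ⬝ᵥ a) := by
      rw [dotProduct_sub, sub_projection_dotProduct_mulVec hB' y, zero_sub, neg_neg]
    calc (r ⬝ᵥ w i) ^ 2 = (q ⬝ᵥ a) ^ 2 / (q ⬝ᵥ q) := by rw [hrw, hqa, neg_sq]
      _ ≤ a ⬝ᵥ a := div_le_of_le_mul₀ hQpos.le (dotProduct_self_nonneg a)
        ((sq_dotProduct_le q a).trans_eq (mul_comm _ _))
      _ ≤ 4 / c * regExcess μ ν B (w i) B' (w' i) := by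
        rw [div_mul_eq_mul_div, le_div_iff₀ hc]
        linarith [mul_dotProduct_self_le_four_regExcess hx he hmean hS B B' (w i) (w' i)]
  calc ∑ i ∈ Finset.univ.filter (· < j), (r ⬝ᵥ w i) ^ 2
      ≤ ∑ i ∈ Finset.univ.filter (· < j), 4 / c * regExcess μ ν B (w i) B' (w' i) :=
        Finset.sum_le_sum fun i _ => hterm i
    _ ≤ 4 * ε / c := by
        rw [← Finset.mul_sum, div_mul_eq_mul_div, div_le_div_iff_of_pos_right hc]
        linarith

end Excess

lemma prod_le_sum_div_card_pow {ι : Type*} [Fintype ι] (f : ι → ℝ) (hf : ∀ i, 0 ≤ f i) :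
    ∏ i, f i ≤ ((∑ i, f i) / Fintype.card ι) ^ Fintype.card ι := by
  rcases isEmpty_or_nonempty ι with hι | hι
  · simp
  have hcard : (0 : ℝ) < Fintype.card ι := by exact_mod_cast Fintype.card_pos
  have hamgm := Real.geom_mean_le_arith_mean Finset.univ (fun _ => 1) f (fun _ _ => zero_le_one)
    (by simpa using hcard) (fun i _ => hf i)
  simp only [Real.rpow_one, Finset.sum_const, Finset.card_univ, nsmul_eq_mul, mul_one,
    one_mul] at hamgm
  rw [Real.rpow_inv_le_iff_of_pos (Finset.prod_nonneg fun i _ => hf i)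
    (div_nonneg (Finset.sum_nonneg fun i _ => hf i) hcard.le) hcard, Real.rpow_natCast] at hamgm
  exact hamgm

section EllipticPotential

variable {ι : Type*} [DecidableEq ι]

noncomputable def regularizedGram (α : ℝ) (W : ℕ → ι → ℝ) (m : ℕ) : Matrix ι ι ℝ :=
  α • 1 + ∑ i ∈ Finset.range m, vecMulVec (W i) (W i)

variable {α : ℝ} {W : ℕ → ι → ℝ}

lemma regularizedGram_zero : regularizedGram α W 0 = α • 1 := by
  simp [regularizedGram]

lemma regularizedGram_succ (m : ℕ) :
    regularizedGram α W (m + 1) = regularizedGram α W m + vecMulVec (W m) (W m) := by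
  simp only [regularizedGram, Finset.sum_range_succ, add_assoc]

variable [Fintype ι]

lemma det_add_vecMulVec {R : Type*} [CommRing R] {M : Matrix ι ι R} (hM : IsUnit M.det)
    (u v : ι → R) : (M + vecMulVec u v).det = M.det * (1 + v ⬝ᵥ (M⁻¹ *ᵥ u)) := by
  rw [vecMulVec_eq Unit, det_add_replicateCol_mul_replicateRow hM]
  congr 1
  rw [det_unique, Matrix.mul_assoc, ← replicateCol_mulVec]
  simp [one_apply]

lemma sq_dotProduct_le_mul_dotProduct_inv_mulVec {M : Matrix ι ι ℝ} (hM : M.PosDef)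
    (r v : ι → ℝ) : (r ⬝ᵥ v) ^ 2 ≤ (r ⬝ᵥ (M *ᵥ r)) * (v ⬝ᵥ (M⁻¹ *ᵥ v)) := by
  set z := M⁻¹ *ᵥ v
  have hMz : M *ᵥ z = v := by
    rw [mulVec_mulVec, mul_nonsing_inv _ hM.det_pos.ne'.isUnit, one_mulVec]
  have hzMr : z ⬝ᵥ (M *ᵥ r) = r ⬝ᵥ v := by
    rw [← transpose_mulVec_dotProduct, (isHermitian_iff_isSymm.1 hM.isHermitian).eq, hMz,
      dotProduct_comm]
  have hquad : ∀ t : ℝ, 0 ≤ (r ⬝ᵥ (M *ᵥ r)) * (t * t) + 2 * (r ⬝ᵥ v) * t + v ⬝ᵥ z := fun t => by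
    have := hM.posSemidef.dotProduct_mulVec_nonneg (t • r + z)
    simp only [star_trivial, mulVec_add, mulVec_smul, add_dotProduct, dotProduct_add,
      smul_dotProduct, dotProduct_smul, smul_eq_mul, hMz, hzMr, dotProduct_comm z v] at this
    linarith
  have := discrim_le_zero hquad
  rw [discrim] at this
  nlinarith

lemma det_le_trace_div_card_pow {M : Matrix ι ι ℝ} (hM : M.PosSemidef) :
    M.det ≤ (M.trace / Fintype.card ι) ^ Fintype.card ι := by
  rw [hM.isHermitian.det_eq_prod_eigenvalues, hM.isHermitian.trace_eq_sum_eigenvalues]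
  simpa using prod_le_sum_div_card_pow _ hM.eigenvalues_nonneg

lemma dotProduct_regularizedGram_mulVec (m : ℕ) (x : ι → ℝ) :
    x ⬝ᵥ (regularizedGram α W m *ᵥ x) = α * (x ⬝ᵥ x) + ∑ i ∈ Finset.range m, (W i ⬝ᵥ x) ^ 2 := by
  simp only [regularizedGram, add_mulVec, smul_mulVec, one_mulVec, dotProduct_add,
    dotProduct_smul, smul_eq_mul, sum_mulVec, dotProduct_sum, vecMulVec_mulVec]
  congr 1
  exact Finset.sum_congr rfl fun i _ => by rw [op_smul_eq_mul, dotProduct_comm x, sq]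

lemma trace_regularizedGram (m : ℕ) :
    (regularizedGram α W m).trace = α * Fintype.card ι + ∑ i ∈ Finset.range m, W i ⬝ᵥ W i := by
  simp [regularizedGram, trace_add, trace_smul, trace_sum, trace_vecMulVec]

lemma posDef_regularizedGram (hα : 0 < α) (m : ℕ) : (regularizedGram α W m).PosDef :=
  (PosDef.one.smul hα).add_posSemidef
    (posSemidef_sum _ fun i _ => by simpa using posSemidef_vecMulVec_self_star (W i))

lemma pow_mul_one_add_pow_le_det_regularizedGram (hα : 0 < α) {ρ : ℝ} (hρ : 0 ≤ ρ) {n : ℕ}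
    (h : ∀ j < n, ρ ≤ W j ⬝ᵥ ((regularizedGram α W j)⁻¹ *ᵥ W j)) :
    α ^ Fintype.card ι * (1 + ρ) ^ n ≤ (regularizedGram α W n).det := by
  induction n with
  | zero => simp [regularizedGram_zero]
  | succ n ih =>
    rw [regularizedGram_succ, det_add_vecMulVec (posDef_regularizedGram hα n).det_pos.ne'.isUnit,
      pow_succ, ← mul_assoc]
    exact mul_le_mul (ih fun j hj => h j (by omega)) (by linarith [h n n.lt_succ_self])
      (by positivity) (posDef_regularizedGram hα n).det_pos.le

lemma det_regularizedGram_le (hα : 0 < α) {n : ℕ} {b : ℝ} (hW : ∀ i < n, W i ⬝ᵥ W i ≤ b) :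
    (regularizedGram α W n).det
      ≤ (α * (1 + b / α * (n / Fintype.card ι))) ^ Fintype.card ι := by
  have hG := (posDef_regularizedGram (W := W) hα n).posSemidef
  refine (det_le_trace_div_card_pow hG).trans
    (pow_le_pow_left₀ (div_nonneg hG.trace_nonneg (Nat.cast_nonneg _)) ?_ _)
  rcases isEmpty_or_nonempty ι with hι | hι
  · simp [hα.le]
  have hsum : ∑ i ∈ Finset.range n, W i ⬝ᵥ W i ≤ n * b :=
    (Finset.sum_le_card_nsmul _ _ b fun i hi => hW i (Finset.mem_range.1 hi)).trans_eq (by simp)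
  rw [trace_regularizedGram, div_le_iff₀ (by positivity)]
  field_simp
  linarith

lemma Fin.sum_filter_lt_eq_sum_range {M : Type*} [AddCommMonoid M] {n : ℕ} (f : ℕ → M)
    (j : Fin n) : ∑ i ∈ Finset.univ.filter (· < j), f i = ∑ i ∈ Finset.range j, f i := by
  rw [Finset.filter_gt_eq_Iio, ← Nat.Iio_eq_range, ← Fin.map_valEmbedding_Iio, Finset.sum_map]
  rfl

theorem elliptic_potential {n : ℕ} {α β b : ℝ} (hα : 0 < α) (hβ : 0 ≤ β)
    (w r : Fin n → ι → ℝ) (hw : ∀ i, w i ⬝ᵥ w i ≤ b) (hr : ∀ j, r j ⬝ᵥ r j ≤ 1)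
    (hprev : ∀ j, ∑ i ∈ Finset.univ.filter (· < j), (r j ⬝ᵥ w i) ^ 2 ≤ α)
    (hnew : ∀ j, β < (r j ⬝ᵥ w j) ^ 2) :
    n * Real.log (1 + β / (2 * α))
      ≤ Fintype.card ι * Real.log (1 + b / α * (n / Fintype.card ι)) := by
  set W : ℕ → ι → ℝ := fun i => if h : i < n then w ⟨i, h⟩ else 0
  have hW : ∀ i : Fin n, W i = w i := fun i => dif_pos i.2
  have hG := posDef_regularizedGram (W := W) hα
  -- Cauchy–Schwarz in the metric of the Gram matrix: `r j` is short there but aligned with `w j`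
  have hgrowth : ∀ j < n, β / (2 * α) ≤ W j ⬝ᵥ ((regularizedGram α W j)⁻¹ *ᵥ W j) := by
    intro j hj
    set jf : Fin n := ⟨j, hj⟩
    have hGr : r jf ⬝ᵥ (regularizedGram α W j *ᵥ r jf) ≤ 2 * α := by
      rw [dotProduct_regularizedGram_mulVec,
        ← Fin.sum_filter_lt_eq_sum_range (fun i => (W i ⬝ᵥ r jf) ^ 2) jf]
      simp only [hW, dotProduct_comm (w _)]
      nlinarith [hr jf, hprev jf]
    have hCS := sq_dotProduct_le_mul_dotProduct_inv_mulVec (hG j) (r jf) (W j)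
    have hinv : 0 ≤ W j ⬝ᵥ ((regularizedGram α W j)⁻¹ *ᵥ W j) := by
      simpa using (hG j).inv.posSemidef.dotProduct_mulVec_nonneg (W j)
    rw [div_le_iff₀ (by positivity)]
    rw [show W j = w jf from hW jf] at hCS hinv ⊢
    nlinarith [hnew jf]
  have hlower := pow_mul_one_add_pow_le_det_regularizedGram hα (by positivity) hgrowth
  have hupper := det_regularizedGram_le (W := W) (b := b) hα (n := n) fun i hi => by
    simpa [W, hi] using hw ⟨i, hi⟩
  rw [mul_pow] at hupper
  have h := le_of_mul_le_mul_left (hlower.trans hupper) (by positivity)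
  rw [← Real.log_pow, ← Real.log_pow]
  exact Real.log_le_log (by positivity) h

end EllipticPotential

lemma le_of_mul_le_log_one_add_mul {L a x : ℝ} (hL : 0 < L) (ha : 0 ≤ a) (hx : 0 ≤ x)
    (h : L * x ≤ Real.log (1 + a * x)) : x ≤ 2 / L * (Real.log (1 + a) + L / 2 + 2 / L) := by
  have hsplit : Real.log (1 + a * x) ≤ Real.log (1 + a) + Real.log (1 + x) := by
    rw [← Real.log_mul (by positivity) (by positivity)]
    exact Real.log_le_log (by positivity) (by nlinarith)
  -- tangent line of `log` at `2 / L`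
  have htangent : Real.log (1 + x) ≤ (1 + x) * (L / 2) + 2 / L - 2 := by
    have hmul : Real.log (1 + x) = Real.log ((1 + x) * (L / 2)) + Real.log (2 / L) := by
      rw [← Real.log_mul (by positivity) (by positivity)]
      congr 1
      field_simp
    rw [hmul]
    linarith [Real.log_le_sub_one_of_pos (show 0 < (1 + x) * (L / 2) by positivity),
      Real.log_le_sub_one_of_pos (show 0 < 2 / L by positivity)]
  rw [div_mul_eq_mul_div, le_div_iff₀ hL]
  nlinarith

lemma natCast_le_of_mul_le_mul_log_one_add_mul {L a : ℝ} (hL : 0 < L) (ha : 0 ≤ a) {n k : ℕ}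
    (h : n * L ≤ k * Real.log (1 + a * (n / k))) :
    (n : ℝ) ≤ k * (2 / L * (Real.log (1 + a) + L / 2 + 2 / L)) := by
  rcases Nat.eq_zero_or_pos k with hk | hk
  · simp only [hk, CharP.cast_eq_zero, zero_mul] at h ⊢
    nlinarith
  have hkR : (0 : ℝ) < k := by exact_mod_cast hk
  calc (n : ℝ) = k * (n / k) := by field_simp
    _ ≤ _ := by
      gcongr
      refine le_of_mul_le_log_one_add_mul hL ha (by positivity) ?_
      rw [mul_div_assoc', div_le_iff₀ hkR]
      linarith

lemma log_one_add_div_le {c ε : ℝ} (hc : 0 ≤ c) (hε : 0 < ε) (hε1 : ε ≤ 1) :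
    Real.log (1 + c / ε) ≤ Real.log (1 + c) + Real.log (1 / ε) := by
  rw [← Real.log_mul (by positivity) (by positivity)]
  refine Real.log_le_log (by positivity) ?_
  have hinv : 1 ≤ 1 / ε := by rwa [le_div_iff₀ hε, one_mul]
  have hexpand : (1 + c) * (1 / ε) = 1 / ε + c / ε := by ring
  linarith

lemma exists_le_mul_log_inv_of_mul_log_le {c : ℝ} (hc : 0 < c) :
    ∃ C > 0, ∀ (n k : ℕ) (ε : ℝ), 0 < ε → ε ≤ 1 / 2 →
      n * Real.log (1 + c / 4) ≤ k * Real.log (1 + c / (16 * ε) * (n / k)) →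
      (n : ℝ) ≤ C * k * Real.log (1 / ε) := by
  set L := Real.log (1 + c / 4)
  have hL : 0 < L := Real.log_pos (by linarith)
  set D := Real.log (1 + c) + L / 2 + 2 / L
  have hD : 0 ≤ D := by
    have := Real.log_nonneg (show 1 ≤ 1 + c by linarith)
    positivity
  have hlog2 : 0 < Real.log 2 := Real.log_pos one_lt_two
  refine ⟨2 / L * (D / Real.log 2 + 1), by positivity, fun n k ε hε hε2 h => ?_⟩
  have hlogε : Real.log 2 ≤ Real.log (1 / ε) :=
    Real.log_le_log two_pos (by rw [le_div_iff₀ hε]; linarith)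
  have hlog := log_one_add_div_le (c := c / 16) (by positivity) hε (by linarith)
  rw [div_div] at hlog
  have hDε : D ≤ D / Real.log 2 * Real.log (1 / ε) := by
    rw [div_mul_eq_mul_div, le_div_iff₀ hlog2]
    nlinarith
  calc (n : ℝ) ≤ k * (2 / L * (Real.log (1 + c / (16 * ε)) + L / 2 + 2 / L)) :=
        natCast_le_of_mul_le_mul_log_one_add_mul hL (by positivity) h
    _ ≤ k * (2 / L * ((D / Real.log 2 + 1) * Real.log (1 / ε))) := by
        gcongr
        have := Real.log_le_log (by positivity) (show 1 + c / 16 ≤ 1 + c by linarith)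
        linarith [show D = Real.log (1 + c) + L / 2 + 2 / L from rfl]
    _ = 2 / L * (D / Real.log 2 + 1) * k * Real.log (1 / ε) := by ring

theorem task_eluder_dim_noisy_linear_regression_general (c₁ c₂ : ℝ) (hc₁ : 0 < c₁) :
    ∃ C : ℝ, 0 < C ∧
      ∀ (d k : ℕ) (μ : Measure (Fin d → ℝ)), IsProbabilityMeasure μ →
      (∀ᵐ x ∂μ, l2norm x ≤ 1) →
      ∀ ν : Measure ℝ, IsProbabilityMeasure ν →
      (∀ᵐ e ∂ν, |e| ≤ 1 / 2) → (∫ e, e ∂ν = 0) →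
      ((Matrix.of fun i j : Fin d => ∫ x, x i * x j ∂μ) -
          c₁ • (1 : Matrix (Fin d) (Fin d) ℝ)).PosSemidef →
      (c₂ • (1 : Matrix (Fin d) (Fin d) ℝ) -
          Matrix.of fun i j : Fin d => ∫ x, x i * x j ∂μ).PosSemidef →
      ∀ ε : ℝ, 0 < ε → ε < 1 →
      ∀ (n : ℕ) (B : Matrix (Fin d) (Fin k) ℝ), Bᵀ * B = 1 →
      ∀ w : Fin n → Fin k → ℝ, (∀ i, l2norm (w i) ≤ 1 / 2) →
      (∀ j : Fin n, regEpsIndepAt μ ν ε B w j) →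
      (n : ℝ) ≤ C * k * Real.log (1 / ε) := by
  obtain ⟨C, hC, hbound⟩ := exists_le_mul_log_inv_of_mul_log_le hc₁
  refine ⟨C, hC, fun d k μ _ hx ν _ he hmean hS _ ε hε hε1 n B hB w hw hind => ?_⟩
  choose r hr hnew hprev using fun j =>
    exists_direction_of_regEpsIndepAt hx he hmean hc₁ hS hε hB (hw j) (hind j)
  have hw' : ∀ i, w i ⬝ᵥ w i ≤ 1 / 4 := fun i =>
    ((l2norm_le_iff (by norm_num)).1 (hw i)).trans_eq (by norm_num)
  rcases Nat.eq_zero_or_pos n with rfl | hn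
  · simpa using mul_nonneg (mul_nonneg hC.le k.cast_nonneg)
      (Real.log_nonneg (one_le_one_div hε hε1.le))
  have hε2 : ε ≤ 1 / 2 := by
    let j : Fin n := ⟨0, hn⟩
    nlinarith [hnew j, sq_dotProduct_le (r j) (w j), hr j, hw' j, dotProduct_self_nonneg (w j)]
  have hpotential := elliptic_potential (α := 4 * ε / c₁) (β := 2 * ε) (b := 1 / 4)
    (by positivity) (by positivity) w r hw' hr hprev hnew
  rw [Fintype.card_fin, show 2 * ε / (2 * (4 * ε / c₁)) = c₁ / 4 by field_simp,
    show 1 / 4 / (4 * ε / c₁) = c₁ / (16 * ε) by field_simp; ring] at hpotential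
  exact hbound n k ε hε hε2 hpotential

/-- Task-eluder dimension bound for noisy linear regression: if the second-moment matrix of `μ`
satisfies `c₁ I ⪯ Σ ⪯ c₂ I` and the noise `ν` is supported on `[-1/2, 1/2]` with mean zero,
then there is `C > 0` depending only on `c₁, c₂` such that every `ε`-independent task sequence
has length at most `C · k · log(1/ε)`, i.e. `dim(H, F, ε) ≤ C · k · log(1/ε)`. -/
theorem task_eluder_dim_noisy_linear_regression (c₁ c₂ : ℝ) (hc₁ : 0 < c₁) (hc₁₂ : c₁ ≤ c₂) :
    ∃ C : ℝ, 0 < C ∧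
      ∀ (d k : ℕ) (μ : Measure (Fin d → ℝ)), IsProbabilityMeasure μ →
      (∀ᵐ x ∂μ, l2norm x ≤ 1) →
      ∀ ν : Measure ℝ, IsProbabilityMeasure ν →
      (∀ᵐ e ∂ν, |e| ≤ 1 / 2) → (∫ e, e ∂ν = 0) →
      ((Matrix.of fun i j : Fin d => ∫ x, x i * x j ∂μ) -
          c₁ • (1 : Matrix (Fin d) (Fin d) ℝ)).PosSemidef →
      (c₂ • (1 : Matrix (Fin d) (Fin d) ℝ) -
          Matrix.of fun i j : Fin d => ∫ x, x i * x j ∂μ).PosSemidef →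
      ∀ ε : ℝ, 0 < ε → ε < 1 →
      ∀ (n : ℕ) (B : Matrix (Fin d) (Fin k) ℝ), Bᵀ * B = 1 →
      ∀ w : Fin n → Fin k → ℝ, (∀ i, l2norm (w i) ≤ 1 / 2) →
      (∀ j : Fin n, regEpsIndepAt μ ν ε B w j) →
      (n : ℝ) ≤ C * k * Real.log (1 / ε) :=
  task_eluder_dim_noisy_linear_regression_general c₁ c₂ hc₁
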